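/- arXiv:2309.02756 — 2 statements merged into one kernel-verified Lean document; each statement's English description precedes it below -/
import Mathlib

section
/- Trace suffix property: if E is a cause-respecting RPES and t', t't'' ∈ Traces(E), then t'' ∈ Traces(E \ t'). -/
/-- Data of a (labeled) reversible prime event structure (RPES) over actions `L`:
a carrier set of events, causality `lt`, conflict `conf`, labeling, a set `F` of
reversible events, reverse causality `rc` (`rc e u` means `e ≺ u̲`), prevention
`prev` (`prev e u` means `e ▷ u̲`), and an initial configuration `C0`. -/
structure RPESData (E : Type) (L : Type) where
  carrier : Set E
  lt : E → E → Prop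
  conf : E → E → Prop
  label : E → L
  F : Set E
  rc : E → E → Prop
  prev : E → E → Prop
  C0 : Set E

/-- Data of a (labeled) prime event structure (PES) with empty initial configuration. -/
structure PESData (E : Type) (L : Type) where
  carrier : Set E
  lt : E → E → Prop
  conf : E → E → Prop
  label : E → L

namespace RPESData

variable {E : Type} {L : Type}

/-- A set of events is conflict-free. -/
def ConflictFree (R : RPESData E L) (X : Set E) : Prop :=
  ∀ e ∈ X, ∀ e' ∈ X, ¬ R.conf e e'

/-- Sustained causation: `a ≪ b` iff `a < b` and, if `a` is reversible, `b ▷ a̲`. -/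
def SC (R : RPESData E L) (a b : E) : Prop :=
  R.lt a b ∧ (a ∈ R.F → R.prev b a)

/-- The axioms of a reversible prime event structure. -/
structure IsRPES (R : RPESData E L) : Prop where
  countable : R.carrier.Countable
  lt_carrier : ∀ a b, R.lt a b → a ∈ R.carrier ∧ b ∈ R.carrier
  conf_carrier : ∀ a b, R.conf a b → a ∈ R.carrier ∧ b ∈ R.carrier
  conf_irrefl : ∀ a, ¬ R.conf a a
  conf_symm : ∀ a b, R.conf a b → R.conf b a
  lt_irrefl : ∀ a, ¬ R.lt a a
  lt_trans : ∀ a b c, R.lt a b → R.lt b c → R.lt a c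
  causes_finite : ∀ e, {e' | R.lt e' e}.Finite
  causes_cf : ∀ e, R.ConflictFree {e' | R.lt e' e}
  F_carrier : R.F ⊆ R.carrier
  rc_carrier : ∀ a b, R.rc a b → a ∈ R.carrier ∧ b ∈ R.F
  rc_refl : ∀ u ∈ R.F, R.rc u u
  rcauses_finite : ∀ u ∈ R.F, {e | R.rc e u}.Finite
  rcauses_cf : ∀ u ∈ R.F, R.ConflictFree {e | R.rc e u}
  prev_carrier : ∀ a b, R.prev a b → a ∈ R.carrier ∧ b ∈ R.F
  prev_rc_disjoint : ∀ a b, ¬ (R.prev a b ∧ R.rc a b)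
  sc_trans : ∀ a b c, R.SC a b → R.SC b c → R.SC a c
  conf_hered_sc : ∀ a b c, R.conf a b → R.SC b c → R.conf a c
  C0_carrier : R.C0 ⊆ R.carrier
  C0_finite : R.C0.Finite
  C0_closed : ∀ e ∈ R.C0, ∀ e', R.lt e' e → e' ∈ R.C0
  C0_cf : R.ConflictFree R.C0

/-- A cause-respecting RPES: causality is sustained causation. -/
def CauseRespecting (R : RPESData E L) : Prop :=
  ∀ a b, R.lt a b → R.SC a b

/-- A causal RPES. -/
def Causal (R : RPESData E L) : Prop :=
  (∀ e, ∀ u ∈ R.F, (R.rc e u ↔ e = u)) ∧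
  (∀ e, ∀ u ∈ R.F, (R.prev e u ↔ R.lt u e))

/-- The mixed step `A ∪ B̲` is enabled at configuration `C`. -/
def Enabled (R : RPESData E L) (C A B : Set E) : Prop :=
  A.Finite ∧ B.Finite ∧ A ⊆ R.carrier ∧ B ⊆ R.F ∧
  A ∩ C = ∅ ∧ B ⊆ C ∧ R.ConflictFree (C ∪ A) ∧
  (∀ e ∈ A, ∀ e', R.lt e' e → e' ∈ C \ B) ∧
  (∀ e ∈ B, ∀ e', R.rc e' e → e' ∈ C \ (B \ {e})) ∧
  (∀ e ∈ B, ∀ e', R.prev e' e → e' ∉ C ∪ A)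

/-- `IsTraceFrom R C t C'`: the sequence of mixed steps `t` can be executed
starting at `C`, ending in `C'`. -/
def IsTraceFrom (R : RPESData E L) : Set E → List (Set E × Set E) → Set E → Prop
  | C, [], C' => C' = C
  | C, p :: t, C' => R.Enabled C p.1 p.2 ∧ R.IsTraceFrom ((C \ p.2) ∪ p.1) t C'

/-- `t` is a trace of `R` with `last(t) = C`. -/
def IsTraceTo (R : RPESData E L) (t : List (Set E × Set E)) (C : Set E) : Prop :=
  R.IsTraceFrom R.C0 t C

/-- `t` is a trace of `R`. -/
def IsTrace (R : RPESData E L) (t : List (Set E × Set E)) : Prop :=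
  ∃ C, R.IsTraceTo t C

/-- Reachable configurations: obtained from `C0` by mixed steps. -/
inductive ReachConf (R : RPESData E L) : Set E → Prop
  | init : ReachConf R R.C0
  | step : ∀ C A B, ReachConf R C → R.Enabled C A B → ReachConf R ((C \ B) ∪ A)

/-- Forwards reachable configurations: obtained from `C0` by forward steps only. -/
inductive FwdReachConf (R : RPESData E L) : Set E → Prop
  | init : FwdReachConf R R.C0
  | step : ∀ C A, FwdReachConf R C → R.Enabled C A ∅ → FwdReachConf R ((C \ ∅) ∪ A)

/-- The one-step removal operator: the residual of `R` after the step `A ∪ B̲`. -/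
def residStep (R : RPESData E L) (A B : Set E) : RPESData E L :=
  let At : Set E := (A \ R.F) ∪ {a | a ∈ R.F ∧ ∃ x ∈ A \ R.F, R.lt a x}
  let CA : Set E := {e | e ∈ R.carrier ∧ ∃ a ∈ At, R.conf e a}
  let E' : Set E := R.carrier \ (At ∪ CA)
  let F' : Set E := (R.F ∩ E') \
    ({e | e ∈ R.F ∧ ∃ a ∈ CA, R.rc a e} ∪ {e | e ∈ R.F ∧ ∃ a ∈ At, R.prev a e})
  { carrier := E'
    lt := fun a b => R.lt a b ∧ a ∈ E' ∧ b ∈ E'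
    conf := fun a b => R.conf a b ∧ a ∈ E' ∧ b ∈ E'
    label := R.label
    F := F'
    rc := fun a b => R.rc a b ∧ a ∈ E' ∧ b ∈ F'
    prev := fun a b => R.prev a b ∧ a ∈ E' ∧ b ∈ F'
    C0 := ((R.C0 \ B) ∪ A) ∩ E' }

/-- The residual `R \ t` of `R` after a trace `t`. -/
def resid (R : RPESData E L) (t : List (Set E × Set E)) : RPESData E L :=
  t.foldl (fun S p => S.residStep p.1 p.2) R

/-- The multiset (as a function `L → ℕ`) of action labels of the step `A ∪ B̲`. -/
noncomputable def stepLabel (R : RPESData E L) (A B : Set E) : L → ℕ :=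
  fun a => Nat.card {e : E // e ∈ A ∪ B ∧ R.label e = a}

/-- Forgetting the reversibility structure. -/
def toPES (R : RPESData E L) : PESData E L :=
  ⟨R.carrier, R.lt, R.conf, R.label⟩

end RPESData

namespace PESData

variable {E : Type} {L : Type}

/-- The axioms of a prime event structure. -/
structure IsPES (P : PESData E L) : Prop where
  countable : P.carrier.Countable
  lt_carrier : ∀ a b, P.lt a b → a ∈ P.carrier ∧ b ∈ P.carrier
  conf_carrier : ∀ a b, P.conf a b → a ∈ P.carrier ∧ b ∈ P.carrier
  lt_irrefl : ∀ a, ¬ P.lt a a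
  lt_trans : ∀ a b c, P.lt a b → P.lt b c → P.lt a c
  causes_finite : ∀ e, {e' | P.lt e' e}.Finite
  conf_irrefl : ∀ a, ¬ P.conf a a
  conf_symm : ∀ a b, P.conf a b → P.conf b a
  conf_hered : ∀ a b c, P.conf a b → P.lt b c → P.conf a c

/-- `φ(E, F)`: the RPES obtained from a PES by declaring the events in `F`
reversible, with `e ≺ e̲` for `e ∈ F` and `e ▷ e̲'` whenever `e' ∈ F`, `e' < e`. -/
def toRPES (P : PESData E L) (F : Set E) : RPESData E L :=
  { carrier := P.carrier
    lt := P.lt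
    conf := P.conf
    label := P.label
    F := F
    rc := fun e u => u ∈ F ∧ e = u
    prev := fun e u => u ∈ F ∧ P.lt u e
    C0 := ∅ }

end PESData

/-- A labeled transition system. -/
structure LTS (S : Type) (Λ : Type) where
  tr : S → Λ → S → Prop
  init : S

/-- Bisimulation between labeled transition systems. -/
def IsBisimulation {S S' Λ : Type} (T : LTS S Λ) (T' : LTS S' Λ)
    (Rl : S → S' → Prop) : Prop :=
  Rl T.init T'.init ∧
  (∀ s s', Rl s s' → ∀ M s₁, T.tr s M s₁ → ∃ s₁', T'.tr s' M s₁' ∧ Rl s₁ s₁') ∧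
  (∀ s s', Rl s s' → ∀ M s₁', T'.tr s' M s₁' → ∃ s₁, T.tr s M s₁ ∧ Rl s₁ s₁')

namespace RPESData

variable {E : Type} {L : Type}

/-- Transition relation of the configuration transition system `TC(R)`. -/
def confTr (R : RPESData E L) (C : Set E) (M : L → ℕ) (C' : Set E) : Prop :=
  R.ReachConf C ∧ ∃ A B, R.Enabled C A B ∧ C' = (C \ B) ∪ A ∧ M = R.stepLabel A B

/-- The configuration transition system `TC(R)`. -/
def TC (R : RPESData E L) : LTS (Set E) (L → ℕ) :=
  ⟨R.confTr, R.C0⟩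

/-- Transition relation between residuals: `F ⇀^M F'` iff `F' = F \ (A ∪ B̲)` for
a one-step trace `A ∪ B̲` of `F` with label multiset `M`. -/
def residTr (R' : RPESData E L) (M : L → ℕ) (R'' : RPESData E L) : Prop :=
  ∃ A B, R'.Enabled R'.C0 A B ∧ R'' = R'.residStep A B ∧ M = R'.stepLabel A B

/-- Residuals reachable from `R` via `residTr`. -/
inductive ReachRes (R : RPESData E L) : RPESData E L → Prop
  | init : ReachRes R R
  | step : ∀ R' M R'', ReachRes R R' → residTr R' M R'' → ReachRes R R''

/-- The residual transition system `TE(R)`. -/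
def TE (R : RPESData E L) : LTS (RPESData E L) (L → ℕ) :=
  ⟨residTr, R⟩

end RPESData

/-!
Execute `t'` one step at a time. If `A ∪ B̲` is the first step, every later step of the trace is
still enabled in the residual, at the old configuration cut down to the residual's carrier. The
point is that the events removed by `A` stay in every later configuration: an irreversible event
can never be undone, and a reversible cause `a` of an irreversible `x ∈ A` cannot be undone
either, since in a cause-respecting RPES `a < x` gives `x ▷ a̲`. So later configurations contain
the removed events, hence avoid everything in conflict with them, and their undone events are
not among the reversible events the residual prunes.
-/

namespace RPESData

variable {E L : Type} {R : RPESData E L}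

section Residual

variable (R : RPESData E L) (A : Set E)

def removedEvents : Set E :=
  (A \ R.F) ∪ {a | a ∈ R.F ∧ ∃ x ∈ A \ R.F, R.lt a x}

def conflictEvents : Set E :=
  {e | e ∈ R.carrier ∧ ∃ a ∈ R.removedEvents A, R.conf e a}

def residCarrier : Set E :=
  R.carrier \ (R.removedEvents A ∪ R.conflictEvents A)

def residF : Set E :=
  (R.F ∩ R.residCarrier A) \
    ({e | e ∈ R.F ∧ ∃ a ∈ R.conflictEvents A, R.rc a e} ∪
     {e | e ∈ R.F ∧ ∃ a ∈ R.removedEvents A, R.prev a e})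

lemma residStep_eq (B : Set E) :
    R.residStep A B =
      { carrier := R.residCarrier A
        lt := fun a b => R.lt a b ∧ a ∈ R.residCarrier A ∧ b ∈ R.residCarrier A
        conf := fun a b => R.conf a b ∧ a ∈ R.residCarrier A ∧ b ∈ R.residCarrier A
        label := R.label
        F := R.residF A
        rc := fun a b => R.rc a b ∧ a ∈ R.residCarrier A ∧ b ∈ R.residF A
        prev := fun a b => R.prev a b ∧ a ∈ R.residCarrier A ∧ b ∈ R.residF A
        C0 := ((R.C0 \ B) ∪ A) ∩ R.residCarrier A } := rfl

end Residual

variable {A B C A' B' : Set E}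

lemma ConflictFree.mono {X Y : Set E} (hY : R.ConflictFree Y) (hXY : X ⊆ Y) :
    R.ConflictFree X :=
  fun e he e' he' => hY e (hXY he) e' (hXY he')

lemma notMem_conflictEvents {X : Set E} (hX : R.ConflictFree X)
    (hA : R.removedEvents A ⊆ X) {e : E} (he : e ∈ X) : e ∉ R.conflictEvents A :=
  fun ⟨_, _, ha, hconf⟩ => hX e he _ (hA ha) hconf

lemma Enabled.removedEvents_subset (hen : R.Enabled C A B) :
    R.removedEvents A ⊆ (C \ B) ∪ A := by
  obtain ⟨-, -, -, -, -, -, -, hlt, -⟩ := hen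
  rintro a (ha | ⟨-, x, hx, hax⟩)
  · exact Or.inr ha.1
  · exact Or.inl (hlt x hx.1 a hax)

section Step

variable (hen : R.Enabled C A' B') (hA : R.removedEvents A ⊆ C)
include hen hA

lemma Enabled.subset_residCarrier : A' ⊆ R.residCarrier A := by
  obtain ⟨-, -, hA'c, -, hA'C, -, hcf, -⟩ := hen
  refine fun e he => ⟨hA'c he, ?_⟩
  rintro (hr | hk)
  · exact (Set.eq_empty_iff_forall_notMem.1 hA'C) e ⟨he, hA hr⟩
  · exact notMem_conflictEvents hcf (hA.trans Set.subset_union_left) (Or.inr he) hk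

lemma Enabled.notMem_removedEvents (hcr : R.CauseRespecting) :
    ∀ b ∈ B', b ∉ R.removedEvents A := by
  obtain ⟨-, -, -, hBF, -, -, -, -, -, hprev⟩ := hen
  rintro b hb (⟨-, hbF⟩ | ⟨-, x, hx, hbx⟩)
  · exact hbF (hBF hb)
  · -- cause-respecting gives `x ▷ b̲`, yet `x ∈ C`
    exact hprev b hb x ((hcr b x hbx).2 (hBF hb)) (Or.inl (hA (Or.inl hx)))

lemma Enabled.subset_residF (hF : R.F ⊆ R.carrier) (hcr : R.CauseRespecting) :
    B' ⊆ R.residF A := by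
  have hB' := hen.notMem_removedEvents hA hcr
  obtain ⟨-, -, -, hBF, -, hBC, hcf, -, hrc, hprev⟩ := hen
  have hcfC : R.ConflictFree C := hcf.mono Set.subset_union_left
  refine fun b hb => ⟨⟨hBF hb, hF (hBF hb), ?_⟩, ?_⟩
  · rintro (hr | hk)
    · exact hB' b hb hr
    · exact notMem_conflictEvents hcfC hA (hBC hb) hk
  · rintro (⟨-, a, ha, hab⟩ | ⟨-, a, ha, hab⟩)
    · exact notMem_conflictEvents hcfC hA (hrc b hb a hab).1 ha
    · exact hprev b hb a hab (Or.inl (hA ha))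

lemma Enabled.residStep (hF : R.F ⊆ R.carrier) (hcr : R.CauseRespecting) :
    (R.residStep A B).Enabled (C ∩ R.residCarrier A) A' B' := by
  have hA' := hen.subset_residCarrier hA
  have hB' := hen.subset_residF hA hF hcr
  obtain ⟨hA'f, hB'f, -, -, hA'C, hBC, hcf, hlt, hrc, hprev⟩ := hen
  have hsub : C ∩ R.residCarrier A ∪ A' ⊆ C ∪ A' :=
    Set.union_subset_union_left _ Set.inter_subset_left
  rw [residStep_eq]
  refine ⟨hA'f, hB'f, hA', hB', ?_, fun b hb => ⟨hBC hb, (hB' hb).1.2⟩, ?_, ?_, ?_, ?_⟩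
  · exact Set.subset_eq_empty (Set.inter_subset_inter_right _ Set.inter_subset_left) hA'C
  · rintro e he e' he' ⟨hconf, -, -⟩
    exact hcf.mono hsub e he e' he' hconf
  · rintro e he e' ⟨he'e, he', -⟩
    obtain ⟨he'C, he'B⟩ := hlt e he e' he'e
    exact ⟨⟨he'C, he'⟩, he'B⟩
  · rintro e he e' ⟨he'e, he', -⟩
    obtain ⟨he'C, he'B⟩ := hrc e he e' he'e
    exact ⟨⟨he'C, he'⟩, he'B⟩
  · rintro e he e' ⟨he'e, -, -⟩ he'
    exact hprev e he e' he'e (hsub he')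

end Step

lemma IsTraceFrom.residStep (hF : R.F ⊆ R.carrier) (hcr : R.CauseRespecting) :
    ∀ {t : List (Set E × Set E)} {C C' : Set E}, R.removedEvents A ⊆ C →
      R.IsTraceFrom C t C' →
      (R.residStep A B).IsTraceFrom (C ∩ R.residCarrier A) t (C' ∩ R.residCarrier A)
  | [], _, _, _, h => h ▸ rfl
  | p :: _, C, _, hA, ⟨hen, ht⟩ => by
      have hA' := hen.subset_residCarrier hA
      have hstep : (C ∩ R.residCarrier A) \ p.2 ∪ p.1 = (C \ p.2 ∪ p.1) ∩ R.residCarrier A := by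
        ext x
        have := @hA' x
        simp only [Set.mem_union, Set.mem_sdiff, Set.mem_inter_iff]
        tauto
      refine ⟨hen.residStep hA hF hcr, hstep ▸ IsTraceFrom.residStep hF hcr ?_ ht⟩
      exact fun a ha => Or.inl ⟨hA ha, fun hb => hen.notMem_removedEvents hA hcr a hb ha⟩

lemma CauseRespecting.residStep (hcr : R.CauseRespecting) :
    (R.residStep A B).CauseRespecting := by
  rintro a b ⟨hab, ha, hb⟩
  exact ⟨⟨hab, ha, hb⟩, fun haF => ⟨(hcr a b hab).2 haF.1.1, hb, haF⟩⟩

lemma residStep_F_subset_carrier : (R.residStep A B).F ⊆ (R.residStep A B).carrier :=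
  fun _ he => he.1.2

lemma isTrace_resid_of_isTrace_append {t'' : List (Set E × Set E)} :
    ∀ (t' : List (Set E × Set E)) {R : RPESData E L}, R.F ⊆ R.carrier → R.CauseRespecting →
      R.IsTrace (t' ++ t'') → (R.resid t').IsTrace t''
  | [], _, _, _, h => h
  | _ :: t', _, hF, hcr, ⟨_, hen, ht⟩ =>
      isTrace_resid_of_isTrace_append t' residStep_F_subset_carrier hcr.residStep
        ⟨_, ht.residStep hF hcr hen.removedEvents_subset⟩

end RPESData

theorem trace_suffix_resid_general {E L : Type} (R : RPESData E L) (h : R.IsRPES)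
    (hcr : R.CauseRespecting) (t' t'' : List (Set E × Set E))
    (h2 : R.IsTrace (t' ++ t'')) :
    (R.resid t').IsTrace t'' :=
  RPESData.isTrace_resid_of_isTrace_append t' h.F_carrier hcr h2

/-- If `t'` and `t't''` are traces of a cause-respecting RPES `R`,
then `t''` is a trace of the residual `R \ t'`. -/
theorem trace_suffix_resid {E L : Type} (R : RPESData E L) (h : R.IsRPES)
    (hcr : R.CauseRespecting) (t' t'' : List (Set E × Set E))
    (h1 : R.IsTrace t') (h2 : R.IsTrace (t' ++ t'')) :
    (R.resid t').IsTrace t'' :=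
  trace_suffix_resid_general R h hcr t' t'' h2
end

section
/- Step correspondence between configuration and residual transitions in a cause-respecting RPES: if last(t) ⇀^{l(A∪B̲)} last(t') in the configuration transition system, then E \ t ⇀^{l(A∪B̲)} E \ (t(A∪B̲)) in the residual transition system and last(t(A∪B̲)) = last(t'); conversely, if E' ⇀^{l(A∪B̲)} E'' in the residual system and E' = E \ t, then there exists a trace t' with E'' = E \ t' and last(t) ⇀^{l(A∪B̲)} last(t'). -/
/-!
After a trace ending in the configuration `C`, the residual `R \ t` is determined by `C` and by the
set `D ⊆ C` of events executed irrevocably: it is `R` restricted to the events that neither lie in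
`D` nor conflict with `D`, whose reversible events are those not blocked by `D` (prevented by an
event of `D`, or with a reverse cause in conflict with `D`), and whose initial configuration is
what remains of `C`. A removal step `A ∪ B̲` adds to `D` the irreversible events of `A` and their
reversible causes; cause-respect makes the latter irrevocable too, since an irreversible effect
prevents their reversal. With this description, a step is enabled at `C` in `R` iff it is enabled
at the initial configuration of `R \ t`, and the two transition systems move in lockstep.
-/

namespace RPESData

variable {E L : Type}

def restrict (R : RPESData E L) (X Y C : Set E) : RPESData E L where
  carrier := X
  lt a b := R.lt a b ∧ a ∈ X ∧ b ∈ X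
  conf a b := R.conf a b ∧ a ∈ X ∧ b ∈ X
  label := R.label
  F := Y
  rc a b := R.rc a b ∧ a ∈ X ∧ b ∈ Y
  prev a b := R.prev a b ∧ a ∈ X ∧ b ∈ Y
  C0 := C ∩ X

lemma restrict_self {R : RPESData E L} (h : R.IsRPES) : R.restrict R.carrier R.F R.C0 = R := by
  obtain ⟨carrier, lt, conf, label, F, rc, prev, C0⟩ := R
  simp only [restrict, mk.injEq, Set.inter_eq_left.mpr h.C0_carrier, true_and, and_true]
  refine ⟨?_, ?_, ?_, ?_⟩ <;> ext a b <;>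
    simp only [and_iff_left_iff_imp]
  · exact h.lt_carrier a b
  · exact h.conf_carrier a b
  · exact h.rc_carrier a b
  · exact h.prev_carrier a b

lemma restrict_restrict (R : RPESData E L) {X Y X' Y' : Set E} (C C' : Set E)
    (hX : X' ⊆ X) (hY : Y' ⊆ Y) :
    (R.restrict X Y C).restrict X' Y' C' = R.restrict X' Y' C' := by
  simp only [restrict, mk.injEq, true_and, and_true]
  refine ⟨?_, ?_, ?_, ?_⟩ <;> ext a b <;> simp only [and_assoc] <;> grind

lemma restrict_congr (R : RPESData E L) {X Y C C' : Set E} (hC : C ∩ X = C' ∩ X) :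
    R.restrict X Y C = R.restrict X Y C' := by
  simp only [restrict, hC]

def committed (R : RPESData E L) (A : Set E) : Set E :=
  (A \ R.F) ∪ {a | a ∈ R.F ∧ ∃ x ∈ A \ R.F, R.lt a x}

def conflictSet (R : RPESData E L) (S : Set E) : Set E :=
  {e | e ∈ R.carrier ∧ ∃ a ∈ S, R.conf e a}

lemma residStep_eq_restrict (R : RPESData E L) (A B : Set E) :
    R.residStep A B =
      R.restrict (R.carrier \ (R.committed A ∪ R.conflictSet (R.committed A)))
        ((R.F ∩ (R.carrier \ (R.committed A ∪ R.conflictSet (R.committed A)))) \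
          ({e | e ∈ R.F ∧ ∃ a ∈ R.conflictSet (R.committed A), R.rc a e} ∪
            {e | e ∈ R.F ∧ ∃ a ∈ R.committed A, R.prev a e}))
        ((R.C0 \ B) ∪ A) :=
  rfl

def Blocked (R : RPESData E L) (D : Set E) (e : E) : Prop :=
  (∃ x ∈ D, R.prev x e) ∨ ∃ b, R.rc b e ∧ ∃ d ∈ D, R.conf b d

lemma Blocked.mono {R : RPESData E L} {D D' : Set E} {e : E} (hD : D ⊆ D')
    (hb : R.Blocked D e) : R.Blocked D' e := by
  rcases hb with ⟨x, hx, hp⟩ | ⟨b, hrc, d, hd, hc⟩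
  exacts [Or.inl ⟨x, hD hx, hp⟩, Or.inr ⟨b, hrc, d, hD hd, hc⟩]

lemma blocked_union {R : RPESData E L} {D S : Set E} {e : E} :
    R.Blocked (D ∪ S) e ↔ R.Blocked D e ∨ R.Blocked S e := by
  simp only [Blocked, Set.mem_union]
  grind

def survivors (R : RPESData E L) (D : Set E) : Set E :=
  {e | e ∈ R.carrier ∧ e ∉ D ∧ ∀ d ∈ D, ¬ R.conf e d}

def stillReversible (R : RPESData E L) (D : Set E) : Set E :=
  {e | e ∈ R.F ∧ e ∈ R.survivors D ∧ ¬ R.Blocked D e}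

lemma survivors_anti {R : RPESData E L} {D D' : Set E} (hD : D ⊆ D') :
    R.survivors D' ⊆ R.survivors D :=
  fun _ ⟨he, heD, hc⟩ => ⟨he, fun hd => heD (hD hd), fun d hd => hc d (hD hd)⟩

lemma stillReversible_anti {R : RPESData E L} {D D' : Set E} (hD : D ⊆ D') :
    R.stillReversible D' ⊆ R.stillReversible D :=
  fun _ ⟨heF, heX, hnb⟩ => ⟨heF, survivors_anti hD heX, fun hb => hnb (hb.mono hD)⟩

lemma mem_or_conf_of_notMem_survivors {R : RPESData E L} {D : Set E} {x : E}
    (hx : x ∈ R.carrier) (hxX : x ∉ R.survivors D) : x ∈ D ∨ ∃ d ∈ D, R.conf x d := by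
  by_contra hn
  exact hxX ⟨hx, fun hxD => hn (Or.inl hxD), fun d hd hc => hn (Or.inr ⟨d, hd, hc⟩)⟩

-- `R \ t` for a trace ending in `C` whose irrevocably executed events are `D`
def residualOf (R : RPESData E L) (C D : Set E) : RPESData E L :=
  R.restrict (R.survivors D) (R.stillReversible D) C

lemma residualOf_empty {R : RPESData E L} (h : R.IsRPES) : R.residualOf R.C0 ∅ = R := by
  have hX : R.survivors ∅ = R.carrier := by simp [survivors]
  have hY : R.stillReversible ∅ = R.F := by
    ext e
    simpa [stillReversible, Blocked, hX] using fun he => h.F_carrier he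
  rw [residualOf, hX, hY, restrict_self h]

lemma survivors_union {R : RPESData E L} {C D S : Set E} (hS : S ⊆ R.survivors D) :
    (R.residualOf C D).carrier \ (S ∪ (R.residualOf C D).conflictSet S) =
      R.survivors (D ∪ S) := by
  ext e
  simp only [survivors, conflictSet, residualOf, restrict, Set.mem_sdiff, Set.mem_union,
    Set.mem_ofPred_eq] at hS ⊢
  constructor
  · rintro ⟨⟨he, heD, hDc⟩, hn⟩
    refine ⟨he, by tauto, fun d hd hc => ?_⟩
    rcases hd with hd | hd
    · exact hDc d hd hc
    · exact hn (Or.inr ⟨⟨he, heD, hDc⟩, d, hd, hc, ⟨he, heD, hDc⟩, hS hd⟩)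
  · rintro ⟨he, heDS, hc⟩
    refine ⟨⟨he, fun hd => heDS (Or.inl hd), fun d hd => hc d (Or.inl hd)⟩, ?_⟩
    rintro (heS | ⟨-, a, ha, hea, -⟩)
    exacts [heDS (Or.inr heS), hc a (Or.inr ha) hea]

lemma stillReversible_union {R : RPESData E L} (h : R.IsRPES) {C D S : Set E}
    (hS : S ⊆ R.survivors D) :
    let R' := R.residualOf C D
    (R'.F ∩ R.survivors (D ∪ S)) \
        ({e | e ∈ R'.F ∧ ∃ a ∈ R'.conflictSet S, R'.rc a e} ∪
          {e | e ∈ R'.F ∧ ∃ a ∈ S, R'.prev a e}) =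
      R.stillReversible (D ∪ S) := by
  ext e
  simp only [residualOf, restrict, conflictSet, Set.mem_sdiff, Set.mem_inter_iff, Set.mem_union,
    Set.mem_ofPred_eq, stillReversible, blocked_union, not_or]
  constructor
  · rintro ⟨⟨⟨heF, heX, hnD⟩, heX'⟩, hnrc, hnprev⟩
    refine ⟨heF, heX', hnD, ?_⟩
    rintro (⟨x, hx, hp⟩ | ⟨b, hrc, d, hd, hbd⟩)
    · exact hnprev ⟨⟨heF, heX, hnD⟩, x, hx, hp, hS hx, heF, heX, hnD⟩
    · have hbX : b ∈ R.survivors D := by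
        refine ⟨(h.rc_carrier b e hrc).1, fun hbD => (hS hd).2.2 b hbD (h.conf_symm b d hbd),
          fun d' hd' hc => hnD (Or.inr ⟨b, hrc, d', hd', hc⟩)⟩
      exact hnrc ⟨⟨heF, heX, hnD⟩, b, ⟨hbX, d, hd, hbd, hbX, hS hd⟩, hrc, hbX, heF, heX, hnD⟩
  · rintro ⟨heF, heX', hnD, hnS⟩
    refine ⟨⟨⟨heF, survivors_anti Set.subset_union_left heX', hnD⟩, heX'⟩, ?_, ?_⟩
    · rintro ⟨-, b, ⟨-, d, hd, hbd, -⟩, hrc, -⟩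
      exact hnS (Or.inr ⟨b, hrc, d, hd, hbd⟩)
    · rintro ⟨-, x, hx, hp, -⟩
      exact hnS (Or.inl ⟨x, hx, hp⟩)

lemma committed_subset {R : RPESData E L} {A X : Set E} (hA : A ⊆ X) (hF : R.F ⊆ X) :
    R.committed A ⊆ X := by
  rintro a (ha | ⟨haF, -⟩)
  exacts [hA ha.1, hF haF]

lemma residStep_residualOf {R : RPESData E L} (h : R.IsRPES) {C D A : Set E} (B : Set E)
    (hA : A ⊆ R.survivors D) :
    (R.residualOf C D).residStep A B =
      R.residualOf ((C \ B) ∪ A) (D ∪ (R.residualOf C D).committed A) := by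
  have hS : (R.residualOf C D).committed A ⊆ R.survivors D :=
    committed_subset hA fun _ he => he.2.1
  rw [residStep_eq_restrict, survivors_union hS, stillReversible_union h hS]
  conv_lhs => rw [residualOf]
  rw [restrict_restrict _ _ _ (survivors_anti Set.subset_union_left)
    (stillReversible_anti Set.subset_union_left)]
  refine restrict_congr _ (Set.ext fun e => ⟨?_, ?_⟩)
  · rintro ⟨⟨⟨heC, -⟩, heB⟩ | heA, heX⟩
    exacts [⟨Or.inl ⟨heC, heB⟩, heX⟩, ⟨Or.inr heA, heX⟩]
  · rintro ⟨⟨heC, heB⟩ | heA, heX⟩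
    exacts [⟨Or.inl ⟨⟨heC, survivors_anti Set.subset_union_left heX⟩, heB⟩, heX⟩,
      ⟨Or.inr heA, heX⟩]

-- `D` is a set of events of the configuration `C` that can never be undone
structure Irrevocable (R : RPESData E L) (C D : Set E) : Prop where
  subset_carrier : C ⊆ R.carrier
  conflictFree : R.ConflictFree C
  subset : D ⊆ C
  blocked : ∀ a ∈ D, a ∈ R.F → R.Blocked D a

lemma irrevocable_init {R : RPESData E L} (h : R.IsRPES) : R.Irrevocable R.C0 ∅ :=
  ⟨h.C0_carrier, h.C0_cf, Set.empty_subset _, fun _ ha => ha.elim⟩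

namespace Irrevocable

variable {R : RPESData E L} {C D A B : Set E}

lemma not_blocked (hD : R.Irrevocable C D) (hE : R.Enabled C A B) {b : E} (hb : b ∈ B) :
    ¬ R.Blocked D b := by
  obtain ⟨-, -, -, -, -, -, -, -, hrc, hprev⟩ := hE
  rintro (⟨x, hx, hp⟩ | ⟨b', hrc', d, hd, hc⟩)
  · exact hprev b hb x hp (Or.inl (hD.subset hx))
  · exact hD.conflictFree b' (hrc b hb b' hrc').1 d (hD.subset hd) hc

lemma subset_stillReversible (hD : R.Irrevocable C D) (hE : R.Enabled C A B) :
    B ⊆ R.stillReversible D := by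
  intro b hb
  have hbC : b ∈ C := hE.2.2.2.2.2.1 hb
  have hbF : b ∈ R.F := hE.2.2.2.1 hb
  refine ⟨hbF, ⟨hD.subset_carrier hbC, fun hbD => hD.not_blocked hE hb (hD.blocked b hbD hbF),
    fun d hd => hD.conflictFree b hbC d (hD.subset hd)⟩, hD.not_blocked hE hb⟩

lemma subset_survivors (hD : R.Irrevocable C D) (hE : R.Enabled C A B) :
    A ⊆ R.survivors D := by
  obtain ⟨-, -, hAc, -, hAC, -, hcf, -⟩ := hE
  refine fun a ha => ⟨hAc ha, fun haD => hAC.subset ⟨ha, hD.subset haD⟩, fun d hd => ?_⟩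
  exact hcf a (Or.inr ha) d (Or.inl (hD.subset hd))

lemma mem_of_notMem_survivors (hD : R.Irrevocable C D) {x : E} (hxC : x ∈ C)
    (hx : x ∉ R.survivors D) : x ∈ D := by
  by_contra hxD
  exact hx ⟨hD.subset_carrier hxC, hxD, fun d hd => hD.conflictFree x hxC d (hD.subset hd)⟩

lemma conflictFree_union (h : R.IsRPES) (hD : R.Irrevocable C D) (hAX : A ⊆ R.survivors D)
    (hcf : (R.residualOf C D).ConflictFree ((R.residualOf C D).C0 ∪ A)) :
    R.ConflictFree (C ∪ A) := by
  have hmemD : ∀ x ∈ C ∪ A, x ∉ R.survivors D → x ∈ D := by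
    rintro x (hxC | hxA) hxX
    exacts [hD.mem_of_notMem_survivors hxC hxX, absurd (hAX hxA) hxX]
  intro e he e' he' hc
  by_cases heX : e ∈ R.survivors D <;> by_cases he'X : e' ∈ R.survivors D
  · have lift : ∀ x ∈ C ∪ A, x ∈ R.survivors D → x ∈ (R.residualOf C D).C0 ∪ A :=
      fun x hx hxX => hx.imp_left fun hxC => ⟨hxC, hxX⟩
    exact hcf e (lift e he heX) e' (lift e' he' he'X) ⟨hc, heX, he'X⟩
  · exact heX.2.2 e' (hmemD e' he' he'X) hc
  · exact he'X.2.2 e (hmemD e he heX) (h.conf_symm e e' hc)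
  · exact hD.conflictFree e (hD.subset (hmemD e he heX)) e' (hD.subset (hmemD e' he' he'X)) hc

lemma step (hcr : R.CauseRespecting) (hD : R.Irrevocable C D) (hE : R.Enabled C A B) :
    R.Irrevocable ((C \ B) ∪ A) (D ∪ (R.residualOf C D).committed A) := by
  have hAX := hD.subset_survivors hE
  have hBY := hD.subset_stillReversible hE
  obtain ⟨-, -, hAc, -, -, -, hcf, hlt, -⟩ := hE
  refine ⟨?_, ?_, ?_, ?_⟩
  · rintro x (⟨hxC, -⟩ | hxA)
    exacts [hD.subset_carrier hxC, hAc hxA]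
  · exact fun e he e' he' => hcf e (he.imp_left And.left) e' (he'.imp_left And.left)
  · rintro x (hxD | ⟨hxA, -⟩ | ⟨-, y, ⟨hyA, -⟩, hxy⟩)
    · exact Or.inl ⟨hD.subset hxD, fun hxB => (hBY hxB).2.1.2.1 hxD⟩
    · exact Or.inr hxA
    · exact Or.inl (hlt y hyA x hxy.1)
  · rintro a (haD | ⟨haA, haY⟩ | ⟨-, x, hx, hax⟩) haF
    · exact (hD.blocked a haD haF).mono Set.subset_union_left
    · by_contra hnb
      exact haY ⟨haF, hAX haA, fun hb => hnb (hb.mono Set.subset_union_left)⟩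
    -- cause-respecting: a reversible cause `a` of the irreversible `x ∈ A` is prevented by `x`
    · exact Or.inl ⟨x, Or.inr (Or.inl hx), (hcr a x hax.1).2 haF⟩

end Irrevocable

lemma Enabled.residualOf {R : RPESData E L} {C D A B : Set E} (hD : R.Irrevocable C D)
    (hE : R.Enabled C A B) : (R.residualOf C D).Enabled (R.residualOf C D).C0 A B := by
  have hAX := hD.subset_survivors hE
  have hBY := hD.subset_stillReversible hE
  obtain ⟨hAf, hBf, -, -, hAC, hBC, hcf, hlt, hrc, hprev⟩ := hE
  refine ⟨hAf, hBf, hAX, hBY, ?_, fun b hb => ⟨hBC hb, (hBY hb).2.1⟩, ?_, ?_, ?_, ?_⟩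
  · exact Set.eq_empty_of_subset_empty fun a ⟨ha, haC, _⟩ => hAC.subset ⟨ha, haC⟩
  · exact fun e he e' he' hc => hcf e (he.imp_left And.left) e' (he'.imp_left And.left) hc.1
  · exact fun e he e' hlt' => ⟨⟨(hlt e he e' hlt'.1).1, hlt'.2.1⟩, (hlt e he e' hlt'.1).2⟩
  · exact fun e he e' hrc' => ⟨⟨(hrc e he e' hrc'.1).1, hrc'.2.1⟩, (hrc e he e' hrc'.1).2⟩
  · exact fun e he e' hp hmem => hprev e he e' hp.1 (hmem.imp_left And.left)

lemma Enabled.of_residualOf {R : RPESData E L} (h : R.IsRPES) (hcr : R.CauseRespecting)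
    {C D A B : Set E} (hD : R.Irrevocable C D)
    (hE : (R.residualOf C D).Enabled (R.residualOf C D).C0 A B) : R.Enabled C A B := by
  obtain ⟨hAf, hBf, hAX, hBY, hAC, hBC, hcf, hlt, hrc, hprev⟩ := hE
  have hBX : B ⊆ R.survivors D := fun b hb => (hBY hb).2.1
  refine ⟨hAf, hBf, fun a ha => (hAX ha).1, fun b hb => (hBY hb).1, ?_, fun b hb => (hBC hb).1,
    hD.conflictFree_union h hAX hcf, ?_, ?_, ?_⟩
  · exact Set.eq_empty_of_subset_empty fun a ⟨ha, haC⟩ => hAC.subset ⟨ha, haC, hAX ha⟩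
  · intro e he e' hlt'
    by_cases he'X : e' ∈ R.survivors D
    · exact (hlt e he e' ⟨hlt', he'X, hAX he⟩).imp_left And.left
    rcases mem_or_conf_of_notMem_survivors (h.lt_carrier e' e hlt').1 he'X with he'D | ⟨d, hd, hc⟩
    · exact ⟨hD.subset he'D, fun hb => he'X (hBX hb)⟩
    -- conflict with `D` is inherited along the sustained causation `e' ≪ e`
    · have hde := h.conf_hered_sc d e' e (h.conf_symm e' d hc) (hcr e' e hlt')
      exact absurd (h.conf_symm d e hde) ((hAX he).2.2 d hd)
  · intro e he e' hrc'
    by_cases he'X : e' ∈ R.survivors D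
    · exact (hrc e he e' ⟨hrc', he'X, hBY he⟩).imp_left And.left
    rcases mem_or_conf_of_notMem_survivors (h.rc_carrier e' e hrc').1 he'X with he'D | ⟨d, hd, hc⟩
    · exact ⟨hD.subset he'D, fun hb => he'X (hBX hb.1)⟩
    · exact absurd (Or.inr ⟨e', hrc', d, hd, hc⟩) (hBY he).2.2
  · rintro e he e' hp (he'C | he'A)
    · by_cases he'X : e' ∈ R.survivors D
      · exact hprev e he e' ⟨hp, he'X, hBY he⟩ (Or.inl ⟨he'C, he'X⟩)
      · exact (hBY he).2.2 (Or.inl ⟨e', hD.mem_of_notMem_survivors he'C he'X, hp⟩)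
    · exact hprev e he e' ⟨hp, hAX he'A, hBY he⟩ (Or.inr he'A)

lemma resid_residualOf_of_isTraceFrom {R : RPESData E L} (h : R.IsRPES)
    (hcr : R.CauseRespecting) {t : List (Set E × Set E)} :
    ∀ {C₀ C D : Set E}, R.Irrevocable C₀ D → R.IsTraceFrom C₀ t C →
      ∃ D', R.Irrevocable C D' ∧ (R.residualOf C₀ D).resid t = R.residualOf C D' := by
  induction t with
  | nil =>
    rintro C₀ C D hD rfl
    exact ⟨D, hD, rfl⟩
  | cons p t ih =>
    rintro C₀ C D hD ⟨hE, ht⟩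
    obtain ⟨D', hD', hres⟩ := ih (hD.step hcr hE) ht
    refine ⟨D', hD', ?_⟩
    change ((R.residualOf C₀ D).residStep p.1 p.2).resid t = _
    rwa [residStep_residualOf h p.2 (hD.subset_survivors hE)]

lemma resid_eq_residualOf {R : RPESData E L} (h : R.IsRPES) (hcr : R.CauseRespecting)
    {t : List (Set E × Set E)} {C : Set E} (ht : R.IsTraceTo t C) :
    ∃ D, R.Irrevocable C D ∧ R.resid t = R.residualOf C D := by
  simpa only [residualOf_empty h] using
    resid_residualOf_of_isTraceFrom h hcr (irrevocable_init h) ht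

lemma resid_append_singleton (R : RPESData E L) (t : List (Set E × Set E)) (A B : Set E) :
    R.resid (t ++ [(A, B)]) = (R.resid t).residStep A B := by
  simp only [resid, List.foldl_append, List.foldl_cons, List.foldl_nil]

lemma IsTraceFrom.append_singleton {R : RPESData E L} {A B : Set E} :
    ∀ {t : List (Set E × Set E)} {C₀ C : Set E}, R.IsTraceFrom C₀ t C → R.Enabled C A B →
      R.IsTraceFrom C₀ (t ++ [(A, B)]) ((C \ B) ∪ A)
  | [], _, _, rfl, hE => ⟨hE, rfl⟩
  | _ :: _, _, _, ⟨hE₀, ht⟩, hE => ⟨hE₀, IsTraceFrom.append_singleton ht hE⟩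

lemma IsTraceFrom.reachConf {R : RPESData E L} :
    ∀ {t : List (Set E × Set E)} {C₀ C : Set E}, R.ReachConf C₀ → R.IsTraceFrom C₀ t C →
      R.ReachConf C
  | [], _, _, hC₀, rfl => hC₀
  | p :: _, C₀, _, hC₀, ⟨hE, ht⟩ => IsTraceFrom.reachConf (.step C₀ p.1 p.2 hC₀ hE) ht

end RPESData

/-- Step correspondence between configuration and residual
transitions in a cause-respecting RPES: a configuration step
`last(t) ⇁^{l(A∪B̲)} last(t')` induces the residual step
`R \ t ⇀^{l(A∪B̲)} R \ (t(A∪B̲))` with `last(t(A∪B̲)) = last(t')`, and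
conversely. -/
theorem step_correspondence {E L : Type} (R : RPESData E L) (h : R.IsRPES)
    (hcr : R.CauseRespecting) :
    (∀ (t t' : List (Set E × Set E)) (C C' A B : Set E), R.IsTraceTo t C → R.IsTraceTo t' C' →
      R.Enabled C A B → C' = (C \ B) ∪ A →
      RPESData.residTr (R.resid t) (R.stepLabel A B) (R.resid (t ++ [(A, B)])) ∧
      R.IsTraceTo (t ++ [(A, B)]) C') ∧
    (∀ (t : List (Set E × Set E)) (C : Set E) (R'' : RPESData E L) (M : L → ℕ), R.IsTraceTo t C →
      RPESData.residTr (R.resid t) M R'' →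
      ∃ (t' : List (Set E × Set E)) (C' : Set E), R.IsTraceTo t' C' ∧ R'' = R.resid t' ∧
        R.confTr C M C') := by
  refine ⟨fun t _ C C' A B ht _ hE hC' => ?_, fun t C R'' M ht hstep => ?_⟩
  · obtain ⟨D, hD, hres⟩ := RPESData.resid_eq_residualOf h hcr ht
    refine ⟨⟨A, B, ?_, R.resid_append_singleton t A B, by rw [hres]; rfl⟩,
      hC' ▸ RPESData.IsTraceFrom.append_singleton ht hE⟩
    rw [hres]
    exact hE.residualOf hD
  · obtain ⟨D, hD, hres⟩ := RPESData.resid_eq_residualOf h hcr ht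
    rw [hres] at hstep
    obtain ⟨A, B, hE', rfl, rfl⟩ := hstep
    have hE := hE'.of_residualOf h hcr hD
    exact ⟨t ++ [(A, B)], _, RPESData.IsTraceFrom.append_singleton ht hE,
      by rw [R.resid_append_singleton, hres], RPESData.IsTraceFrom.reachConf .init ht,
      A, B, hE, rfl, rfl⟩
end
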